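/- arXiv:2212.13140 — 4 statements merged into one kernel-verified Lean document; each statement's English description precedes it below -/
import Mathlib

section
/- Let a > 0, γ > 1, and α ∈ (0,1) be real numbers, and let H(ρ,r) = P(ρ) − P′(r)(ρ − r) − P(r) with P(ρ) = a(ρ^γ − ρ)/(γ − 1). Then there exists a constant c > 0, depending only on a, γ and α, such that H(ρ, r) ≥ c (1 + ρ^γ) for all r with α ≤ r ≤ α^{-1} and all ρ ≥ 0 lying outside the interval [α/2, 2/α]. -/
/-!
Up to the factor `a / (γ - 1)`, `H(ρ, r)` is the Bregman divergence
`D(x, y) = x ^ γ - y ^ γ - γ y ^ (γ - 1) (x - y)` of the strictly convex function `x ↦ x ^ γ`.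
It is homogeneous of degree `γ`, positive off the diagonal, and decreases in either variable
as that variable moves towards the other one. If `ρ < α / 2` then `ρ ≤ r / 2`, so
`D(ρ, r) ≥ D(r / 2, r) = r ^ γ D(1 / 2, 1) ≥ α ^ γ D(1 / 2, 1)`, while `ρ ^ γ ≤ 1`. If `ρ > 2 / α`
then `r ≤ ρ / 2`, so `D(ρ, r) ≥ D(ρ, ρ / 2) = ρ ^ γ D(1, 1 / 2)`, while `1 ≤ ρ ^ γ`.
-/

open Real Set

noncomputable section

def rpowBregman (γ x y : ℝ) : ℝ := x ^ γ - y ^ γ - γ * y ^ (γ - 1) * (x - y)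

namespace rpowBregman

variable {γ : ℝ}

theorem pos (hγ : 1 < γ) {x y : ℝ} (hx : 0 ≤ x) (hy : 0 < y) (hxy : x ≠ y) :
    0 < rpowBregman γ x y := by
  have hs : -1 ≤ (x - y) / y := by rw [le_div_iff₀ hy]; linarith
  have hs0 : (x - y) / y ≠ 0 := div_ne_zero (sub_ne_zero.mpr hxy) hy.ne'
  have hbern := one_add_mul_self_lt_rpow_one_add hs hs0 hγ
  rw [show 1 + (x - y) / y = x / y by field_simp; ring, div_rpow hx hy.le] at hbern
  have hyγ : 0 < y ^ γ := rpow_pos_of_pos hy γ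
  have htangent : y ^ γ * (1 + γ * ((x - y) / y)) < x ^ γ := by
    rwa [lt_div_iff₀' hyγ] at hbern
  rw [rpowBregman, rpow_sub_one hy.ne']
  have : y ^ γ * (1 + γ * ((x - y) / y)) = y ^ γ + γ * (y ^ γ / y) * (x - y) := by ring
  linarith

theorem nonneg (hγ : 1 < γ) {x y : ℝ} (hx : 0 ≤ x) (hy : 0 < y) : 0 ≤ rpowBregman γ x y := by
  rcases eq_or_ne x y with rfl | hxy
  · simp [rpowBregman]
  · exact (pos hγ hx hy hxy).le

theorem mul_mul {c x y : ℝ} (hc : 0 < c) (hx : 0 ≤ x) (hy : 0 ≤ y) :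
    rpowBregman γ (c * x) (c * y) = c ^ γ * rpowBregman γ x y := by
  have hc1 : c ^ (γ - 1) * c = c ^ γ := by rw [← rpow_add_one hc.ne']; ring_nf
  simp only [rpowBregman, mul_rpow hc.le hx, mul_rpow hc.le hy]
  linear_combination (-γ * y ^ (γ - 1) * (x - y)) * hc1

theorem antitoneOn_left (hγ : 1 < γ) {y : ℝ} :
    AntitoneOn (fun x => rpowBregman γ x y) (Icc 0 y) := by
  intro x ⟨hx, _⟩ x' ⟨hx', hx'y⟩ hxx'
  rcases hx'.eq_or_lt with rfl | hx'
  · rw [le_antisymm hxx' hx]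
  -- `D(x, y) - D(x', y) = D(x, x') + γ (y ^ (γ - 1) - x' ^ (γ - 1)) (x' - x)`
  have hD := nonneg hγ hx hx'
  have hpow : x' ^ (γ - 1) ≤ y ^ (γ - 1) := rpow_le_rpow hx'.le hx'y (by linarith)
  have hgap : 0 ≤ γ * (y ^ (γ - 1) - x' ^ (γ - 1)) * (x' - x) := by
    apply mul_nonneg (mul_nonneg _ _) <;> linarith
  simp only [rpowBregman] at hD ⊢
  linarith

theorem antitoneOn_right (hγ : 1 < γ) {x : ℝ} :
    AntitoneOn (fun y => rpowBregman γ x y) (Ioc 0 x) := by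
  intro y ⟨hy, _⟩ y' ⟨hy', hy'x⟩ hyy'
  -- `D(x, y) - D(x, y') = D(y', y) + γ (y' ^ (γ - 1) - y ^ (γ - 1)) (x - y')`
  have hD := nonneg hγ hy'.le hy
  have hpow : y ^ (γ - 1) ≤ y' ^ (γ - 1) := rpow_le_rpow hy.le hyy' (by linarith)
  have hgap : 0 ≤ γ * (y' ^ (γ - 1) - y ^ (γ - 1)) * (x - y') := by
    apply mul_nonneg (mul_nonneg _ _) <;> linarith
  simp only [rpowBregman] at hD ⊢
  linarith

theorem ge_of_le_half (hγ : 1 < γ) {x y : ℝ} (hx : 0 ≤ x) (hy : 0 < y) (hxy : x ≤ y / 2) :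
    y ^ γ * rpowBregman γ (1 / 2) 1 ≤ rpowBregman γ x y := by
  rw [← mul_mul hy (by norm_num) zero_le_one, mul_one, mul_one_div]
  exact antitoneOn_left hγ ⟨hx, by linarith⟩ ⟨by linarith, by linarith⟩ hxy

theorem ge_of_two_mul_le (hγ : 1 < γ) {x y : ℝ} (hy : 0 < y) (hxy : 2 * y ≤ x) :
    x ^ γ * rpowBregman γ 1 (1 / 2) ≤ rpowBregman γ x y := by
  rw [← mul_mul (by linarith) zero_le_one (by norm_num), mul_one, mul_one_div]
  exact antitoneOn_right hγ ⟨hy, by linarith⟩ ⟨by linarith, by linarith⟩ (by linarith)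

theorem min_div_two_mul_one_add_rpow_le (hγ : 1 < γ) {α ρ r : ℝ} (hα0 : 0 < α) (hα1 : α < 1)
    (hr : r ∈ Icc α α⁻¹) (hρ : 0 ≤ ρ) (hρout : ρ ∉ Icc (α / 2) (2 / α)) :
    min (α ^ γ * rpowBregman γ (1 / 2) 1) (rpowBregman γ 1 (1 / 2)) / 2 * (1 + ρ ^ γ) ≤
      rpowBregman γ ρ r := by
  obtain ⟨hαr, hrα⟩ := hr
  have hr0 : 0 < r := hα0.trans_le hαr
  set m := min (α ^ γ * rpowBregman γ (1 / 2) 1) (rpowBregman γ 1 (1 / 2))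
  have hm : 0 ≤ m := le_min (mul_nonneg (rpow_nonneg hα0.le γ) (nonneg hγ (by norm_num) one_pos))
    (nonneg hγ zero_le_one (by norm_num))
  rcases not_and_or.mp hρout with hsmall | hlarge
  · have hρ1 : ρ ^ γ ≤ 1 := rpow_le_one hρ (by linarith) (by linarith)
    calc m / 2 * (1 + ρ ^ γ) ≤ m := by nlinarith
      _ ≤ α ^ γ * rpowBregman γ (1 / 2) 1 := min_le_left _ _
      _ ≤ r ^ γ * rpowBregman γ (1 / 2) 1 := by
          gcongr
          exact nonneg hγ (by norm_num) one_pos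
      _ ≤ rpowBregman γ ρ r := ge_of_le_half hγ hρ hr0 (by linarith)
  · have h2α : 2 < 2 / α := by rw [lt_div_iff₀ hα0]; linarith
    have h2r : 2 * r ≤ ρ := by
      have : 2 * r ≤ 2 / α := by rw [div_eq_mul_inv]; linarith
      linarith
    have hρ1 : 1 ≤ ρ ^ γ := one_le_rpow (by linarith) (by linarith)
    calc m / 2 * (1 + ρ ^ γ) ≤ ρ ^ γ * m := by nlinarith
      _ ≤ ρ ^ γ * rpowBregman γ 1 (1 / 2) := by gcongr; exact min_le_right _ _
      _ ≤ rpowBregman γ ρ r := ge_of_two_mul_le hγ hr0 h2r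

end rpowBregman

theorem pressure_bregman_eq {a γ : ℝ} {P : ℝ → ℝ}
    (hP : P = fun ρ : ℝ => a * (ρ ^ γ - ρ) / (γ - 1)) (ρ : ℝ) {r : ℝ} (hr : r ≠ 0) :
    P ρ - deriv P r * (ρ - r) - P r = a / (γ - 1) * rpowBregman γ ρ r := by
  have hP' : HasDerivAt P (a * (γ * r ^ (γ - 1) - 1) / (γ - 1)) r := by
    rw [hP]
    exact (((hasDerivAt_rpow_const (Or.inl hr)).sub (hasDerivAt_id r)).const_mul a).div_const _
  rw [hP'.deriv, hP, rpowBregman]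
  ring

end

/-- With `P(ρ) = a(ρ^γ − ρ)/(γ − 1)` (`a > 0`, `γ > 1`) and
`H(ρ,r) = P(ρ) − P′(r)(ρ − r) − P(r)`, for every `α ∈ (0,1)` there is a constant `c > 0`
(depending only on `a`, `γ`, `α`) such that `H(ρ,r) ≥ c(1 + ρ^γ)` whenever
`α ≤ r ≤ α⁻¹` and `ρ ≥ 0` lies outside the interval `[α/2, 2/α]`. -/
theorem relative_energy_growth_lower_bound (a γ α : ℝ) (ha : 0 < a) (hγ : 1 < γ)
    (hα : α ∈ Set.Ioo (0:ℝ) 1)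
    (P : ℝ → ℝ) (hP : P = fun ρ : ℝ => a * (ρ ^ γ - ρ) / (γ - 1))
    (H : ℝ → ℝ → ℝ)
    (hH : H = fun ρ r : ℝ => P ρ - deriv P r * (ρ - r) - P r) :
    ∃ c : ℝ, 0 < c ∧ ∀ ρ r : ℝ, r ∈ Set.Icc α α⁻¹ → 0 ≤ ρ →
      ρ ∉ Set.Icc (α / 2) (2 / α) →
      c * (1 + ρ ^ γ) ≤ H ρ r := by
  obtain ⟨hα0, hα1⟩ := hα
  set κ := a / (γ - 1)
  have hκ : 0 < κ := div_pos ha (by linarith)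
  set m := min (α ^ γ * rpowBregman γ (1 / 2) 1) (rpowBregman γ 1 (1 / 2))
  have hm : 0 < m := lt_min
    (mul_pos (rpow_pos_of_pos hα0 γ) (rpowBregman.pos hγ (by norm_num) one_pos (by norm_num)))
    (rpowBregman.pos hγ zero_le_one (by norm_num) (by norm_num))
  refine ⟨κ * (m / 2), by positivity, fun ρ r hr hρ hρout => ?_⟩
  rw [hH]; beta_reduce
  rw [pressure_bregman_eq hP ρ (hα0.trans_le hr.1).ne', mul_assoc]
  exact mul_le_mul_of_nonneg_left
    (rpowBregman.min_div_two_mul_one_add_rpow_le hγ hα0 hα1 hr hρ hρout) hκ.le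
end

section
/- Let a > 0 and γ > 1 be real numbers and let H(ρ,1) = P(ρ) − P′(1)(ρ − 1) − P(1) with P(ρ) = a(ρ^γ − ρ)/(γ − 1). Then there exists a constant c > 0, depending only on a and γ, such that for every ρ ≥ 0: if |ρ − 1| ≤ 1/2 then (ρ − 1)² ≤ c · H(ρ, 1), and if |ρ − 1| > 1/2 then |ρ − 1|^γ ≤ c · H(ρ, 1). -/
/-!
Up to the factor `a / (γ - 1)`, `H(ρ, 1)` is `g(ρ) = ρ ^ γ - 1 - γ (ρ - 1)`, the gap between
`ρ ^ γ` and its tangent line at `1`. On `[1/2, 3/2]` the second derivative `γ (γ - 1) ρ ^ (γ - 2)`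
is bounded below, which gives the quadratic bound. Away from `1`, convexity of `g` and `g(1) = 0`
force linear growth, `g(ρ) ≥ 2 |ρ - 1| min (g(1/2)) (g(3/2))`, and this absorbs the affine part of
`|ρ - 1| ^ γ ≤ 1 + ρ ^ γ = g(ρ) + 2 + γ (ρ - 1)`.
-/

open Set

theorem ConvexOn.add_mul_sub_le {S : Set ℝ} {f : ℝ → ℝ} {f' x y : ℝ} (hf : ConvexOn ℝ S f)
    (hx : x ∈ S) (hy : y ∈ S) (hf' : HasDerivAt f f' x) : f x + f' * (y - x) ≤ f y := by
  rcases lt_trichotomy x y with hxy | rfl | hyx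
  · have := hf.le_slope_of_hasDerivAt hx hy hxy hf'
    rw [slope_def_field, le_div_iff₀ (sub_pos.2 hxy)] at this
    linarith
  · simp
  · have := hf.slope_le_of_hasDerivAt hy hx hyx hf'
    rw [slope_def_field, div_le_iff₀ (sub_pos.2 hyx)] at this
    linarith

theorem add_mul_sub_add_sq_le_of_le_deriv2 {D : Set ℝ} (hD : Convex ℝ D) {f f' f'' : ℝ → ℝ}
    {m x y : ℝ} (hf : ∀ z ∈ D, HasDerivAt f (f' z) z)
    (hf' : ∀ z ∈ interior D, HasDerivAt f' (f'' z) z) (hm : ∀ z ∈ interior D, m ≤ f'' z)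
    (hx : x ∈ D) (hy : y ∈ D) :
    f x + f' x * (y - x) + m / 2 * (y - x) ^ 2 ≤ f y := by
  have hq : ∀ z, HasDerivAt (fun z ↦ m / 2 * (z - x) ^ 2) (m * (z - x)) z := fun z ↦
    ((((hasDerivAt_id z).sub_const x).pow 2).const_mul (m / 2)).congr_deriv (by simp; ring)
  have hq' : ∀ z, HasDerivAt (fun z ↦ m * (z - x)) m z := fun z ↦ by
    simpa using ((hasDerivAt_id z).sub_const x).const_mul m
  have hconv : ConvexOn ℝ D (fun z ↦ f z - m / 2 * (z - x) ^ 2) :=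
    convexOn_of_hasDerivWithinAt2_nonneg hD
      (fun z hz ↦ ((hf z hz).sub (hq z)).continuousAt.continuousWithinAt)
      (fun z hz ↦ ((hf z (interior_subset hz)).sub (hq z)).hasDerivWithinAt)
      (fun z hz ↦ ((hf' z hz).sub (hq' z)).hasDerivWithinAt)
      (fun z hz ↦ sub_nonneg.2 (hm z hz))
  have := hconv.add_mul_sub_le hx hy ((hf x hx).sub (hq x))
  simp only [sub_self, mul_zero, sub_zero, zero_pow two_ne_zero] at this
  linarith

theorem ConvexOn.map_add_smul_sub_le_mul {E : Type*} [AddCommGroup E] [Module ℝ E] {s : Set E}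
    {f : E → ℝ} {x₀ x : E} {t : ℝ} (hf : ConvexOn ℝ s f) (hx₀ : x₀ ∈ s) (hf₀ : f x₀ = 0)
    (hx : x ∈ s) (ht₀ : 0 ≤ t) (ht₁ : t ≤ 1) : f (x₀ + t • (x - x₀)) ≤ t * f x := by
  have h := hf.2 hx₀ hx (sub_nonneg.2 ht₁) ht₀ (sub_add_cancel 1 t)
  rw [hf₀, smul_eq_mul, smul_eq_mul, mul_zero, zero_add] at h
  rwa [show x₀ + t • (x - x₀) = (1 - t) • x₀ + t • x by module]

theorem min_rpow_le_rpow_of_mem_Icc {a b x p : ℝ} (ha : 0 < a) (hx : x ∈ Icc a b) :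
    min (a ^ p) (b ^ p) ≤ x ^ p := by
  rcases le_total 0 p with hp | hp
  · exact (min_le_left _ _).trans (Real.rpow_le_rpow ha.le hx.1 hp)
  · exact (min_le_right _ _).trans (Real.rpow_le_rpow_of_nonpos (ha.trans_le hx.1) hx.2 hp)

theorem abs_sub_one_rpow_le_one_add_rpow {x γ : ℝ} (hx : 0 ≤ x) (hγ : 0 ≤ γ) :
    |x - 1| ^ γ ≤ 1 + x ^ γ := by
  rcases le_total x 1 with h | h
  · have : |x - 1| ^ γ ≤ 1 :=
      Real.rpow_le_one (abs_nonneg _) (by rw [abs_le]; constructor <;> linarith) hγ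
    linarith [Real.rpow_nonneg hx γ]
  · have : |x - 1| ^ γ ≤ x ^ γ :=
      Real.rpow_le_rpow (abs_nonneg _) (by rw [abs_of_nonneg (by linarith)]; linarith) hγ
    linarith

noncomputable def rpowTangentGap (γ x : ℝ) : ℝ := x ^ γ - 1 - γ * (x - 1)

theorem rpowTangentGap_one (γ : ℝ) : rpowTangentGap γ 1 = 0 := by
  simp [rpowTangentGap]

theorem rpowTangentGap_nonneg {γ x : ℝ} (hγ : 1 ≤ γ) (hx : 0 ≤ x) : 0 ≤ rpowTangentGap γ x := by
  have := one_add_mul_self_le_rpow_one_add (by linarith : -1 ≤ x - 1) hγ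
  rw [add_sub_cancel] at this
  unfold rpowTangentGap
  linarith

theorem rpowTangentGap_pos {γ x : ℝ} (hγ : 1 < γ) (hx : 0 ≤ x) (hx₁ : x ≠ 1) :
    0 < rpowTangentGap γ x := by
  have := one_add_mul_self_lt_rpow_one_add (by linarith : -1 ≤ x - 1) (sub_ne_zero.2 hx₁) hγ
  rw [add_sub_cancel] at this
  unfold rpowTangentGap
  linarith

theorem convexOn_rpowTangentGap {γ : ℝ} (hγ : 1 ≤ γ) : ConvexOn ℝ (Ici 0) (rpowTangentGap γ) := by
  refine ⟨convex_Ici 0, fun x hx y hy a b ha hb hab ↦ ?_⟩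
  have := (convexOn_rpow hγ).2 hx hy ha hb hab
  simp only [smul_eq_mul, rpowTangentGap] at this ⊢
  linear_combination this + (1 - γ) * hab

theorem mul_sq_le_rpowTangentGap {γ x : ℝ} (hγ : 1 ≤ γ) (hx : |x - 1| ≤ 1 / 2) :
    γ * (γ - 1) * min ((1 / 2 : ℝ) ^ (γ - 2)) ((3 / 2) ^ (γ - 2)) / 2 * (x - 1) ^ 2 ≤
      rpowTangentGap γ x := by
  have hpos : ∀ z ∈ Icc (1 / 2 : ℝ) (3 / 2), z ≠ 0 := fun z hz ↦ by linarith [hz.1]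
  have key := add_mul_sub_add_sq_le_of_le_deriv2 (convex_Icc (1 / 2 : ℝ) (3 / 2))
    (f := fun z ↦ z ^ γ) (f' := fun z ↦ γ * z ^ (γ - 1))
    (f'' := fun z ↦ γ * ((γ - 1) * z ^ (γ - 1 - 1)))
    (m := γ * (γ - 1) * min ((1 / 2 : ℝ) ^ (γ - 2)) ((3 / 2) ^ (γ - 2))) (x := 1) (y := x)
    (fun z hz ↦ Real.hasDerivAt_rpow_const (Or.inl (hpos z hz)))
    (fun z hz ↦ (Real.hasDerivAt_rpow_const
      (Or.inl (hpos z (interior_subset hz)))).const_mul γ)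
    (fun z hz ↦ by
      rw [interior_Icc] at hz
      rw [show γ - 1 - 1 = γ - 2 by ring, ← mul_assoc]
      exact mul_le_mul_of_nonneg_left (min_rpow_le_rpow_of_mem_Icc (by norm_num)
        (Ioo_subset_Icc_self hz)) (mul_nonneg (by linarith) (by linarith)))
    ⟨by norm_num, by norm_num⟩ (by rw [abs_le] at hx; constructor <;> linarith)
  simp only [Real.one_rpow, mul_one] at key
  unfold rpowTangentGap
  linarith

theorem two_mul_abs_sub_one_mul_min_le_rpowTangentGap {γ x : ℝ} (hγ : 1 ≤ γ) (hx : 0 ≤ x)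
    (hx₁ : 1 / 2 ≤ |x - 1|) :
    2 * |x - 1| * min (rpowTangentGap γ (1 / 2)) (rpowTangentGap γ (3 / 2)) ≤
      rpowTangentGap γ x := by
  have hd : 0 < |x - 1| := by linarith
  set t := 1 / (2 * |x - 1|) with ht
  have ht₀ : 0 < t := by positivity
  have ht₁ : t ≤ 1 := by rw [ht, div_le_one (by positivity)]; linarith
  have hconv := (convexOn_rpowTangentGap hγ).map_add_smul_sub_le_mul (mem_Ici.2 zero_le_one)
    (rpowTangentGap_one γ) (mem_Ici.2 hx) ht₀.le ht₁
  have hmin : min (rpowTangentGap γ (1 / 2)) (rpowTangentGap γ (3 / 2)) ≤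
      rpowTangentGap γ (1 + t • (x - 1)) := by
    rcases le_total x 1 with h | h
    · have h' : x - 1 < 0 := by rw [abs_of_nonpos (by linarith)] at hx₁; linarith
      rw [smul_eq_mul, ht, abs_of_neg h', show 1 + 1 / (2 * -(x - 1)) * (x - 1) = 1 / 2 by
        field_simp [h'.ne]; ring]
      exact min_le_left _ _
    · have h' : 0 < x - 1 := by rw [abs_of_nonneg (by linarith)] at hx₁; linarith
      rw [smul_eq_mul, ht, abs_of_pos h', show 1 + 1 / (2 * (x - 1)) * (x - 1) = 3 / 2 by
        field_simp; ring]
      exact min_le_right _ _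
  calc 2 * |x - 1| * min (rpowTangentGap γ (1 / 2)) (rpowTangentGap γ (3 / 2))
      ≤ 2 * |x - 1| * (t * rpowTangentGap γ x) := by gcongr; exact hmin.trans hconv
    _ = rpowTangentGap γ x := by rw [ht]; field_simp

theorem exists_sq_le_mul_rpowTangentGap {γ : ℝ} (hγ : 1 < γ) :
    ∃ C, 0 < C ∧ ∀ x, |x - 1| ≤ 1 / 2 → (x - 1) ^ 2 ≤ C * rpowTangentGap γ x := by
  set m := γ * (γ - 1) * min ((1 / 2 : ℝ) ^ (γ - 2)) ((3 / 2) ^ (γ - 2))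
  have hm : 0 < m := by
    have : 0 < min ((1 / 2 : ℝ) ^ (γ - 2)) ((3 / 2) ^ (γ - 2)) := by positivity
    have : 0 < γ - 1 := by linarith
    positivity
  refine ⟨2 / m, by positivity, fun x hx ↦ ?_⟩
  have := mul_sq_le_rpowTangentGap hγ.le hx
  rw [div_mul_eq_mul_div, le_div_iff₀ hm]
  linarith

theorem exists_abs_sub_one_rpow_le_mul_rpowTangentGap {γ : ℝ} (hγ : 1 < γ) :
    ∃ C, 0 < C ∧ ∀ x, 0 ≤ x → 1 / 2 < |x - 1| → |x - 1| ^ γ ≤ C * rpowTangentGap γ x := by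
  set m := min (rpowTangentGap γ (1 / 2)) (rpowTangentGap γ (3 / 2))
  have hm : 0 < m := lt_min (rpowTangentGap_pos hγ (by norm_num) (by norm_num))
    (rpowTangentGap_pos hγ (by norm_num) (by norm_num))
  refine ⟨1 + (4 + γ) / (2 * m), by positivity, fun x hx hx₁ ↦ ?_⟩
  have hlin := two_mul_abs_sub_one_mul_min_le_rpowTangentGap hγ.le hx hx₁.le
  have hrpow := abs_sub_one_rpow_le_one_add_rpow hx (by linarith : 0 ≤ γ)
  have hlin' : |x - 1| ≤ rpowTangentGap γ x / (2 * m) := by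
    rw [le_div_iff₀ (by positivity)]; linarith
  have hle := le_abs_self (x - 1)
  calc |x - 1| ^ γ ≤ rpowTangentGap γ x + (4 + γ) * |x - 1| := by
        unfold rpowTangentGap; nlinarith
    _ ≤ rpowTangentGap γ x + (4 + γ) * (rpowTangentGap γ x / (2 * m)) := by
        nlinarith
    _ = (1 + (4 + γ) / (2 * m)) * rpowTangentGap γ x := by ring

theorem deriv_pressurePotential_one {a γ : ℝ} (hγ : γ ≠ 1) :
    deriv (fun ρ : ℝ ↦ a * (ρ ^ γ - ρ) / (γ - 1)) 1 = a := by
  have h : HasDerivAt (fun ρ : ℝ ↦ a * (ρ ^ γ - ρ) / (γ - 1))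
      (a * (γ * 1 ^ (γ - 1) - 1) / (γ - 1)) 1 :=
    (((Real.hasDerivAt_rpow_const (Or.inl one_ne_zero)).sub (hasDerivAt_id 1)).const_mul
      a).div_const (γ - 1)
  rw [h.deriv, Real.one_rpow, mul_one, mul_div_assoc, div_self (sub_ne_zero.2 hγ), mul_one]

/-- With `P(ρ) = a(ρ^γ − ρ)/(γ − 1)` (`a > 0`, `γ > 1`) and
`H(ρ,1) = P(ρ) − P′(1)(ρ − 1) − P(1)`, there is a constant `c > 0` (depending only on
`a` and `γ`) such that for every `ρ ≥ 0`: if `|ρ − 1| ≤ 1/2` then `(ρ − 1)² ≤ c H(ρ,1)`,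
and if `|ρ − 1| > 1/2` then `|ρ − 1|^γ ≤ c H(ρ,1)`. -/
theorem relative_energy_lower_bound_at_one (a γ : ℝ) (ha : 0 < a) (hγ : 1 < γ)
    (P : ℝ → ℝ) (hP : P = fun ρ : ℝ => a * (ρ ^ γ - ρ) / (γ - 1))
    (H : ℝ → ℝ → ℝ)
    (hH : H = fun ρ r : ℝ => P ρ - deriv P r * (ρ - r) - P r) :
    ∃ c : ℝ, 0 < c ∧ ∀ ρ : ℝ, 0 ≤ ρ →
      (|ρ - 1| ≤ 1 / 2 → (ρ - 1) ^ 2 ≤ c * H ρ 1) ∧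
      (1 / 2 < |ρ - 1| → |ρ - 1| ^ γ ≤ c * H ρ 1) := by
  have hγ₁ : 0 < γ - 1 := sub_pos.2 hγ
  have hH₁ : ∀ ρ, H ρ 1 = a / (γ - 1) * rpowTangentGap γ ρ := fun ρ ↦ by
    subst hH hP
    beta_reduce
    rw [deriv_pressurePotential_one hγ.ne']
    simp only [rpowTangentGap, Real.one_rpow]
    field_simp
    ring
  obtain ⟨C₁, -, hnear⟩ := exists_sq_le_mul_rpowTangentGap hγ
  obtain ⟨C₂, hC₂, hfar⟩ := exists_abs_sub_one_rpow_le_mul_rpowTangentGap hγ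
  have hc : ∀ ρ, (γ - 1) / a * max C₁ C₂ * H ρ 1 = max C₁ C₂ * rpowTangentGap γ ρ := fun ρ ↦ by
    rw [hH₁]; field_simp
  refine ⟨(γ - 1) / a * max C₁ C₂, by positivity, fun ρ hρ ↦ ⟨fun h ↦ ?_, fun h ↦ ?_⟩⟩
  all_goals rw [hc]
  · exact (hnear ρ h).trans (mul_le_mul_of_nonneg_right (le_max_left _ _)
      (rpowTangentGap_nonneg hγ.le hρ))
  · exact (hfar ρ hρ h).trans (mul_le_mul_of_nonneg_right (le_max_right _ _)
      (rpowTangentGap_nonneg hγ.le hρ))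
end

section
/- Let G : ℝ × ℝ^N → ℝ^N be continuously differentiable with G(0,0) = 0 and operator norm of the total derivative satisfying ‖DG(ρ,q)‖ ≤ α for every (ρ,q), where α ≥ 0. Then for every β ∈ (0,1) there exists a constant c > 0, depending only on α and β, such that for all ρ, r ∈ [β, 1/β] and all m, n ∈ ℝ^N: ρ · ‖G(ρ,m)/ρ − G(r,n)/r‖² ≤ c ( (ρ − r)² (1 + ‖n‖²) + ‖m − n‖² ). -/
/-! The mean value inequality makes `G` an `α`-Lipschitz map vanishing at the origin. Writing
`ρ⁻¹ G(ρ,m) − r⁻¹ G(r,n) = ρ⁻¹ (G(ρ,m) − G(r,n)) + (ρ⁻¹ − r⁻¹) G(r,n)`, the first term is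
controlled by `|ρ − r| + ‖m − n‖` and the second by `|ρ − r| (r + ‖n‖)`, since on `[β, 1/β]`
the map `ρ ↦ ρ⁻¹` is Lipschitz with constant `β⁻²`. -/

open Set

section

variable {E F : Type*} [NormedAddCommGroup E] [NormedAddCommGroup F]

lemma norm_inv_smul_sub_inv_smul_sq_le [NormedSpace ℝ F] (u v : F) (ρ r : ℝ) :
    ‖ρ⁻¹ • u - r⁻¹ • v‖ ^ 2 ≤ 2 * (ρ⁻¹ ^ 2 * ‖u - v‖ ^ 2) + 2 * ((ρ⁻¹ - r⁻¹) ^ 2 * ‖v‖ ^ 2) := by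
  have hsplit : ρ⁻¹ • u - r⁻¹ • v = ρ⁻¹ • (u - v) + (ρ⁻¹ - r⁻¹) • v := by
    rw [smul_sub, sub_smul]; abel
  calc ‖ρ⁻¹ • u - r⁻¹ • v‖ ^ 2 ≤ (‖ρ⁻¹ • (u - v)‖ + ‖(ρ⁻¹ - r⁻¹) • v‖) ^ 2 := by
        rw [hsplit]; gcongr; exact norm_add_le _ _
    _ ≤ 2 * (‖ρ⁻¹ • (u - v)‖ ^ 2 + ‖(ρ⁻¹ - r⁻¹) • v‖ ^ 2) := add_sq_le
    _ = 2 * (ρ⁻¹ ^ 2 * ‖u - v‖ ^ 2) + 2 * ((ρ⁻¹ - r⁻¹) ^ 2 * ‖v‖ ^ 2) := by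
        simp only [norm_smul, Real.norm_eq_abs, mul_pow, sq_abs]; ring

lemma inv_sub_inv_sq_le {β ρ r : ℝ} (hβ : 0 < β) (hρ : β ≤ ρ) (hr : β ≤ r) :
    (ρ⁻¹ - r⁻¹) ^ 2 ≤ β⁻¹ ^ 4 * (ρ - r) ^ 2 := by
  have hρr : β ^ 2 ≤ ρ * r := by nlinarith
  have hρr0 : 0 < ρ * r := mul_pos (hβ.trans_le hρ) (hβ.trans_le hr)
  have hinv : (ρ * r)⁻¹ ≤ (β ^ 2)⁻¹ := inv_anti₀ (by positivity) hρr
  calc (ρ⁻¹ - r⁻¹) ^ 2 = (ρ * r)⁻¹ ^ 2 * (ρ - r) ^ 2 := by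
        field_simp [(hβ.trans_le hρ).ne', (hβ.trans_le hr).ne']; ring
    _ ≤ ((β ^ 2)⁻¹) ^ 2 * (ρ - r) ^ 2 := by gcongr
    _ = β⁻¹ ^ 4 * (ρ - r) ^ 2 := by rw [inv_pow]; ring

lemma WithLp.norm_toLp_prod_sq (a : ℝ) (b : E) :
    ‖WithLp.toLp 2 (a, b)‖ ^ 2 = a ^ 2 + ‖b‖ ^ 2 := by
  rw [WithLp.prod_norm_sq_eq_of_L2, WithLp.toLp_fst, WithLp.toLp_snd, Real.norm_eq_abs, sq_abs]

lemma norm_sub_sq_le_of_lipschitz {G : WithLp 2 (ℝ × E) → F} {α : ℝ}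
    (hG : ∀ x y, ‖G x - G y‖ ≤ α * ‖x - y‖) (a b : ℝ) (m n : E) :
    ‖G (WithLp.toLp 2 (a, m)) - G (WithLp.toLp 2 (b, n))‖ ^ 2
      ≤ α ^ 2 * ((a - b) ^ 2 + ‖m - n‖ ^ 2) := by
  rw [← WithLp.norm_toLp_prod_sq, ← mul_pow, ← Prod.mk_sub_mk, WithLp.toLp_sub]
  exact pow_le_pow_left₀ (norm_nonneg _) (hG _ _) 2

theorem relative_noise_le_of_lipschitz [NormedSpace ℝ F] {G : WithLp 2 (ℝ × E) → F}
    {α β ρ r : ℝ} (hG : ∀ x y, ‖G x - G y‖ ≤ α * ‖x - y‖) (hG0 : G 0 = 0) (hβ : 0 < β)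
    (hρ : ρ ∈ Icc β β⁻¹) (hr : r ∈ Icc β β⁻¹) (m n : E) :
    ρ * ‖ρ⁻¹ • G (WithLp.toLp 2 (ρ, m)) - r⁻¹ • G (WithLp.toLp 2 (r, n))‖ ^ 2
      ≤ 4 * α ^ 2 * β⁻¹ ^ 7 * ((ρ - r) ^ 2 * (1 + ‖n‖ ^ 2) + ‖m - n‖ ^ 2) := by
  set e := β⁻¹
  have he : 1 ≤ e := by nlinarith [mul_inv_cancel₀ hβ.ne', hρ.1.trans hρ.2]
  have hdiff := norm_sub_sq_le_of_lipschitz hG ρ r m n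
  have hvalue : ‖G (WithLp.toLp 2 (r, n))‖ ^ 2 ≤ α ^ 2 * (e ^ 2 * (1 + ‖n‖ ^ 2)) := by
    have h := norm_sub_sq_le_of_lipschitz hG r 0 n 0
    simp only [Prod.mk_zero_zero, WithLp.toLp_zero, hG0, sub_zero] at h
    refine h.trans (mul_le_mul_of_nonneg_left ?_ (sq_nonneg α))
    have hr2 : r ^ 2 ≤ e ^ 2 := pow_le_pow_left₀ (hβ.trans_le hr.1).le hr.2 2
    nlinarith [sq_nonneg ‖n‖, one_le_pow₀ (n := 2) he]
  have hρinv : ρ⁻¹ ^ 2 ≤ e ^ 2 := pow_le_pow_left₀ (inv_nonneg.2 (hβ.trans_le hρ.1).le)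
    (inv_anti₀ hβ hρ.1) 2
  have hcoef := inv_sub_inv_sq_le hβ hρ.1 hr.1
  have hsum := norm_inv_smul_sub_inv_smul_sq_le (G (WithLp.toLp 2 (ρ, m)))
    (G (WithLp.toLp 2 (r, n))) ρ r
  set a := (ρ - r) ^ 2
  set b := ‖m - n‖ ^ 2
  set t := 1 + ‖n‖ ^ 2
  have ht : 1 ≤ t := le_add_of_nonneg_right (sq_nonneg _)
  have hat : a ≤ a * t := le_mul_of_one_le_right (sq_nonneg _) ht
  have he26 : e ^ 2 ≤ e ^ 6 := pow_le_pow_right₀ he (by norm_num)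
  have hfirst : ρ⁻¹ ^ 2 * ‖G (WithLp.toLp 2 (ρ, m)) - G (WithLp.toLp 2 (r, n))‖ ^ 2
      ≤ e ^ 6 * (α ^ 2 * (a * t + b)) :=
    calc _ ≤ e ^ 2 * (α ^ 2 * (a + b)) := by gcongr
      _ ≤ e ^ 6 * (α ^ 2 * (a * t + b)) := by gcongr
  have hsecond : (ρ⁻¹ - r⁻¹) ^ 2 * ‖G (WithLp.toLp 2 (r, n))‖ ^ 2
      ≤ e ^ 6 * (α ^ 2 * (a * t + b)) :=
    calc _ ≤ e ^ 4 * a * (α ^ 2 * (e ^ 2 * t)) := by gcongr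
      _ = e ^ 6 * (α ^ 2 * (a * t)) := by ring
      _ ≤ e ^ 6 * (α ^ 2 * (a * t + b)) := by gcongr; exact le_add_of_nonneg_right (sq_nonneg _)
  calc ρ * ‖ρ⁻¹ • G (WithLp.toLp 2 (ρ, m)) - r⁻¹ • G (WithLp.toLp 2 (r, n))‖ ^ 2
      ≤ e * (2 * (e ^ 6 * (α ^ 2 * (a * t + b))) + 2 * (e ^ 6 * (α ^ 2 * (a * t + b)))) := by
        gcongr
        · exact hρ.2
        · linarith
    _ = 4 * α ^ 2 * e ^ 7 * (a * t + b) := by ring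

end

theorem relative_noise_estimate_general (N : ℕ) (α : ℝ)
    (G : WithLp 2 (ℝ × EuclideanSpace ℝ (Fin N)) → EuclideanSpace ℝ (Fin N))
    (hG : ContDiff ℝ 1 G) (hG0 : G 0 = 0)
    (hbound : ∀ x : WithLp 2 (ℝ × EuclideanSpace ℝ (Fin N)), ‖fderiv ℝ G x‖ ≤ α)
    (β : ℝ) (hβ : β ∈ Set.Ioo (0:ℝ) 1) :
    ∃ c : ℝ, 0 < c ∧ ∀ ρ r : ℝ, ρ ∈ Set.Icc β (1 / β) → r ∈ Set.Icc β (1 / β) →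
      ∀ m n : EuclideanSpace ℝ (Fin N),
        ρ * ‖ρ⁻¹ • G ((WithLp.equiv 2 (ℝ × EuclideanSpace ℝ (Fin N))).symm (ρ, m))
            - r⁻¹ • G ((WithLp.equiv 2 (ℝ × EuclideanSpace ℝ (Fin N))).symm (r, n))‖ ^ 2
          ≤ c * ((ρ - r) ^ 2 * (1 + ‖n‖ ^ 2) + ‖m - n‖ ^ 2) := by
  have hlip : ∀ x y, ‖G x - G y‖ ≤ α * ‖x - y‖ := fun x y =>
    convex_univ.norm_image_sub_le_of_norm_fderiv_le
      (fun z _ => (hG.differentiable one_ne_zero).differentiableAt)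
      (fun z _ => hbound z) (mem_univ y) (mem_univ x)
  have hβ0 := hβ.1
  refine ⟨4 * α ^ 2 * β⁻¹ ^ 7 + 1, by positivity, ?_⟩
  intro ρ r hρ hr m n
  rw [one_div] at hρ hr
  calc _ ≤ 4 * α ^ 2 * β⁻¹ ^ 7 * ((ρ - r) ^ 2 * (1 + ‖n‖ ^ 2) + ‖m - n‖ ^ 2) :=
        relative_noise_le_of_lipschitz hlip hG0 hβ0 hρ hr m n
    _ ≤ _ := by gcongr; linarith

/-- Let `G : ℝ × ℝ^N → ℝ^N` (Euclidean norm on `ℝ × ℝ^N`) be `C¹` with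
`G(0,0) = 0` and `‖DG‖ ≤ α` everywhere, `α ≥ 0`. Then for every `β ∈ (0,1)` there is a
constant `c > 0` (depending only on `α`, `β`) such that for all `ρ, r ∈ [β, 1/β]` and all
`m, n ∈ ℝ^N`: `ρ‖G(ρ,m)/ρ − G(r,n)/r‖² ≤ c((ρ − r)²(1 + ‖n‖²) + ‖m − n‖²)`. -/
theorem relative_noise_estimate (N : ℕ) (hN : 1 ≤ N) (α : ℝ) (hα : 0 ≤ α)
    (G : WithLp 2 (ℝ × EuclideanSpace ℝ (Fin N)) → EuclideanSpace ℝ (Fin N))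
    (hG : ContDiff ℝ 1 G) (hG0 : G 0 = 0)
    (hbound : ∀ x : WithLp 2 (ℝ × EuclideanSpace ℝ (Fin N)), ‖fderiv ℝ G x‖ ≤ α)
    (β : ℝ) (hβ : β ∈ Set.Ioo (0:ℝ) 1) :
    ∃ c : ℝ, 0 < c ∧ ∀ ρ r : ℝ, ρ ∈ Set.Icc β (1 / β) → r ∈ Set.Icc β (1 / β) →
      ∀ m n : EuclideanSpace ℝ (Fin N),
        ρ * ‖ρ⁻¹ • G ((WithLp.equiv 2 (ℝ × EuclideanSpace ℝ (Fin N))).symm (ρ, m))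
            - r⁻¹ • G ((WithLp.equiv 2 (ℝ × EuclideanSpace ℝ (Fin N))).symm (r, n))‖ ^ 2
          ≤ c * ((ρ - r) ^ 2 * (1 + ‖n‖ ^ 2) + ‖m - n‖ ^ 2) :=
  relative_noise_estimate_general N α G hG hG0 hbound β hβ
end

section
/- Let X be a compact metric space equipped with its Borel σ-algebra and let V be a finite Borel measure on X. Let (f_n) and (g_n) be sequences of V-integrable real-valued functions on X with |f_n| ≤ g_n V-almost everywhere for every n. Let μ be a finite signed Borel measure and λ a finite Borel measure on X such that for every continuous function φ : X → ℝ one has ∫ φ f_n dV → ∫ φ dμ and ∫ φ g_n dV → ∫ φ dλ as n → ∞. Then the total variation measure |μ| of μ satisfies |μ|(A) ≤ λ(A) for every Borel set A ⊆ X. -/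
/-!
Passing to the limit in `|∫ φ fₙ dV| ≤ ∫ |φ| gₙ dV` gives `|∫ φ dμ⁺ - ∫ φ dμ⁻| ≤ ∫ |φ| dλ` for
every bounded continuous `φ`. Since bounded continuous functions are dense in `L¹(μ⁺ + μ⁻ + λ)`,
this extends to every integrable `φ`, in particular to `φ = 1_{A \ S} - 1_{A ∩ S}` for a Hahn set
`S` carrying `μ⁻`; for this `φ` the left side is `|μ|(A)` and the right side is `λ(A)`.
-/

open MeasureTheory Filter BoundedContinuousFunction

theorem abs_integral_mul_le_integral_abs_mul {X : Type*} [MeasurableSpace X] {V : Measure X}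
    {φ u v : X → ℝ} {C : ℝ} (hφ : AEStronglyMeasurable φ V) (hφC : ∀ᵐ x ∂V, ‖φ x‖ ≤ C)
    (hu : Integrable u V) (hv : Integrable v V) (huv : ∀ᵐ x ∂V, |u x| ≤ v x) :
    |∫ x, φ x * u x ∂V| ≤ ∫ x, |φ x| * v x ∂V := by
  have hφu : Integrable (fun x => |φ x * u x|) V := (hu.bdd_mul hφ hφC).abs
  have hφv : Integrable (fun x => |φ x| * v x) V := hv.bdd_mul hφ.norm (by simpa using hφC)
  calc |∫ x, φ x * u x ∂V| ≤ ∫ x, |φ x * u x| ∂V := abs_integral_le_integral_abs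
    _ ≤ ∫ x, |φ x| * v x ∂V := integral_mono_ae hφu hφv <| by
      filter_upwards [huv] with x hx
      rw [abs_mul]
      exact mul_le_mul_of_nonneg_left hx (abs_nonneg _)

theorem abs_integral_sub_integral_le_integral_abs_sub {X : Type*} [MeasurableSpace X]
    {ν : Measure X} {f g : X → ℝ} (hf : Integrable f ν) (hg : Integrable g ν) :
    |∫ x, f x ∂ν - ∫ x, g x ∂ν| ≤ ∫ x, |f x - g x| ∂ν := by
  rw [← integral_sub hf hg]
  exact abs_integral_le_integral_abs

theorem integral_abs_le_integral_abs_add_integral_abs_sub {X : Type*} [MeasurableSpace X]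
    {ν : Measure X} {f g : X → ℝ} (hf : Integrable f ν) (hg : Integrable g ν) :
    ∫ x, |g x| ∂ν ≤ ∫ x, |f x| ∂ν + ∫ x, |f x - g x| ∂ν := by
  have hfg : Integrable (fun x => |f x - g x|) ν := (hf.sub hg).abs
  rw [← integral_add hf.abs hfg]
  refine integral_mono hg.abs (hf.abs.add hfg) fun x => ?_
  have := abs_sub_abs_le_abs_sub (g x) (f x)
  rw [abs_sub_comm] at this
  linarith

theorem abs_integral_sub_le_integral_abs_of_boundedContinuous {X : Type*} [PseudoMetricSpace X]
    [MeasurableSpace X] [BorelSpace X] {ν₁ ν₂ lam : Measure X} [IsFiniteMeasure ν₁]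
    [IsFiniteMeasure ν₂] [IsFiniteMeasure lam]
    (h : ∀ φ : X →ᵇ ℝ, |∫ x, φ x ∂ν₁ - ∫ x, φ x ∂ν₂| ≤ ∫ x, |φ x| ∂lam)
    {f : X → ℝ} (hf : Integrable f (ν₁ + ν₂ + lam)) :
    |∫ x, f x ∂ν₁ - ∫ x, f x ∂ν₂| ≤ ∫ x, |f x| ∂lam := by
  refine le_of_forall_pos_le_add fun ε hε => ?_
  obtain ⟨φ, hfφ, hφ⟩ := hf.exists_boundedContinuous_integral_sub_le hε
  have hf₁ := hf.left_of_add_measure.left_of_add_measure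
  have hf₂ := hf.left_of_add_measure.right_of_add_measure
  have hf₃ := hf.right_of_add_measure
  have hφ₁ := hφ.left_of_add_measure.left_of_add_measure
  have hφ₂ := hφ.left_of_add_measure.right_of_add_measure
  have hφ₃ := hφ.right_of_add_measure
  simp only [Real.norm_eq_abs] at hfφ
  have hfφ_int : Integrable (fun x => |f x - φ x|) (ν₁ + ν₂ + lam) := (hf.sub hφ).abs
  rw [integral_add_measure hfφ_int.left_of_add_measure hfφ_int.right_of_add_measure,
    integral_add_measure hfφ_int.left_of_add_measure.left_of_add_measure
      hfφ_int.left_of_add_measure.right_of_add_measure] at hfφ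
  have h₁ := abs_integral_sub_integral_le_integral_abs_sub hf₁ hφ₁
  have h₂ := abs_integral_sub_integral_le_integral_abs_sub hf₂ hφ₂
  have h₃ := integral_abs_le_integral_abs_add_integral_abs_sub hf₃ hφ₃
  have hφlam := h φ
  rw [abs_le] at h₁ h₂ hφlam ⊢
  constructor <;> linarith

theorem measure_add_le_of_abs_integral_sub_le {X : Type*} [MeasurableSpace X]
    {ν₁ ν₂ lam : Measure X} [IsFiniteMeasure ν₁] [IsFiniteMeasure ν₂] [IsFiniteMeasure lam]
    (hν : ν₁ ⟂ₘ ν₂)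
    (h : ∀ f : X → ℝ, Integrable f (ν₁ + ν₂ + lam) →
      |∫ x, f x ∂ν₁ - ∫ x, f x ∂ν₂| ≤ ∫ x, |f x| ∂lam)
    {A : Set X} (hA : MeasurableSet A) : (ν₁ + ν₂) A ≤ lam A := by
  obtain ⟨S, hS, hν₁S, hν₂S⟩ := hν
  have hP : MeasurableSet (A \ S) := hA.diff hS
  have hN : MeasurableSet (A \ Sᶜ) := hA.diff hS.compl
  have hint (ν : Measure X) [IsFiniteMeasure ν] :
      ∫ x, ((A \ S).indicator (1 : X → ℝ) x - (A \ Sᶜ).indicator 1 x) ∂ν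
        = ν.real (A \ S) - ν.real (A \ Sᶜ) := by
    rw [integral_sub ((integrable_const 1).indicator hP) ((integrable_const 1).indicator hN),
      integral_indicator_one hP, integral_indicator_one hN]
  have habs (x : X) :
      |(A \ S).indicator (1 : X → ℝ) x - (A \ Sᶜ).indicator 1 x| = A.indicator 1 x := by
    by_cases hxA : x ∈ A <;> by_cases hxS : x ∈ S <;> simp [hxA, hxS]
  have := h (fun x => (A \ S).indicator (1 : X → ℝ) x - (A \ Sᶜ).indicator 1 x)
    (((integrable_const 1).indicator hP).sub ((integrable_const 1).indicator hN))
  simp only [hint, habs, integral_indicator_one hA] at this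
  have h₁P : ν₁ (A \ S) = ν₁ A := measure_sdiff_null hν₁S
  have h₂N : ν₂ (A \ Sᶜ) = ν₂ A := measure_sdiff_null hν₂S
  have h₁N : ν₁ (A \ Sᶜ) = 0 := measure_mono_null (fun x hx => not_not.1 hx.2) hν₁S
  have h₂P : ν₂ (A \ S) = 0 := measure_mono_null (fun x hx => hx.2) hν₂S
  simp only [measureReal_def, h₁P, h₂N, h₁N, h₂P, ENNReal.toReal_zero, sub_zero, zero_sub,
    sub_neg_eq_add] at this
  rw [abs_of_nonneg (by positivity)] at this
  rwa [← ENNReal.toReal_le_toReal (by finiteness) (by finiteness), Measure.add_apply,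
    ENNReal.toReal_add (by finiteness) (by finiteness)]

theorem defect_measure_domination_general
    {X : Type*} [MetricSpace X] [MeasurableSpace X] [BorelSpace X]
    (V : Measure X)
    (f g : ℕ → X → ℝ)
    (hf_int : ∀ n, Integrable (f n) V) (hg_int : ∀ n, Integrable (g n) V)
    (hdom : ∀ n, ∀ᵐ x ∂V, |f n x| ≤ g n x)
    (μ : SignedMeasure X) (lam : Measure X) [IsFiniteMeasure lam]
    (hμ : ∀ φ : X → ℝ, Continuous φ →
      Tendsto (fun n => ∫ x, φ x * f n x ∂V) atTop
        (nhds ((∫ x, φ x ∂μ.toJordanDecomposition.posPart)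
          - ∫ x, φ x ∂μ.toJordanDecomposition.negPart)))
    (hlam : ∀ φ : X → ℝ, Continuous φ →
      Tendsto (fun n => ∫ x, φ x * g n x ∂V) atTop (nhds (∫ x, φ x ∂lam))) :
    ∀ A : Set X, MeasurableSet A → μ.totalVariation A ≤ lam A := by
  intro A hA
  have hbcf (φ : X →ᵇ ℝ) : |∫ x, φ x ∂μ.toJordanDecomposition.posPart
      - ∫ x, φ x ∂μ.toJordanDecomposition.negPart| ≤ ∫ x, |φ x| ∂lam :=
    le_of_tendsto_of_tendsto' (hμ φ φ.continuous).abs (hlam _ φ.continuous.abs) fun n =>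
      abs_integral_mul_le_integral_abs_mul φ.continuous.aestronglyMeasurable
        (.of_forall φ.norm_coe_le_norm) (hf_int n) (hg_int n) (hdom n)
  exact measure_add_le_of_abs_integral_sub_le μ.toJordanDecomposition.mutuallySingular
    (fun _ hh => abs_integral_sub_le_integral_abs_of_boundedContinuous hbcf hh) hA

/-- Comparison of weak* limits of dominated sequences. Let `X` be a
compact metric space, `V` a finite Borel measure on `X`, `(f_n)`, `(g_n)` `V`-integrable
with `|f_n| ≤ g_n` `V`-a.e. Suppose the signed measure `μ` and the finite measure `λ`
satisfy `∫ φ f_n dV → ∫ φ dμ` and `∫ φ g_n dV → ∫ φ dλ` for every continuous `φ`.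
Then `|μ|(A) ≤ λ(A)` for every Borel set `A`, where `|μ|` is the total variation of `μ`. -/
theorem defect_measure_domination
    {X : Type*} [MetricSpace X] [CompactSpace X] [MeasurableSpace X] [BorelSpace X]
    (V : Measure X) [IsFiniteMeasure V]
    (f g : ℕ → X → ℝ)
    (hf_int : ∀ n, Integrable (f n) V) (hg_int : ∀ n, Integrable (g n) V)
    (hdom : ∀ n, ∀ᵐ x ∂V, |f n x| ≤ g n x)
    (μ : SignedMeasure X) (lam : Measure X) [IsFiniteMeasure lam]
    (hμ : ∀ φ : X → ℝ, Continuous φ →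
      Tendsto (fun n => ∫ x, φ x * f n x ∂V) atTop
        (nhds ((∫ x, φ x ∂μ.toJordanDecomposition.posPart)
          - ∫ x, φ x ∂μ.toJordanDecomposition.negPart)))
    (hlam : ∀ φ : X → ℝ, Continuous φ →
      Tendsto (fun n => ∫ x, φ x * g n x ∂V) atTop (nhds (∫ x, φ x ∂lam))) :
    ∀ A : Set X, MeasurableSet A → μ.totalVariation A ≤ lam A :=
  defect_measure_domination_general V f g hf_int hg_int hdom μ lam hμ hlam
end
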